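/- The Thue–Morse sequence is not built from any finite word of odd length other than the single letter 0. -/

import Mathlib

/-- A block of `a` ones. -/
def ones (a : ℕ) : List Bool := List.replicate a true

/-- Words over {0,1} that begin and end with 0 (false = 0, true = 1). -/
def InF (v : List Bool) : Prop := v.head? = some false ∧ v.getLast? = some false

/-- `w` is a prefix of the infinite word `V`. -/
def PrefixOf (w : List Bool) (V : ℕ → Bool) : Prop :=
  ∀ i, i < w.length → w.getD i false = V i

/-- Finite stages `v 1^{a 0} v 1^{a 1} v ⋯ v`. -/
def stage (v : List Bool) (a : ℕ → ℕ) : ℕ → List Bool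
  | 0 => v
  | n + 1 => stage v a n ++ ones (a n) ++ v

/-- The infinite word `V` is built from `v`: `V = v 1^{a₁} v 1^{a₂} v ⋯`. -/
def BuiltFrom (V : ℕ → Bool) (v : List Bool) : Prop :=
  ∃ a : ℕ → ℕ, ∀ n, PrefixOf (stage v a n) V

/-- A finite word `w` is built from `v`: `w = v 1^{a₁} v ⋯ v 1^{a_k} v`, `k ≥ 1`. -/
def FBuiltFrom (w v : List Bool) : Prop :=
  ∃ a : List ℕ, a ≠ [] ∧ w = v ++ (a.map fun n => ones n ++ v).flatten

/-- `A_V`, the set of words in `𝓕` from which `V` is built. -/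
def AV (V : ℕ → Bool) : Set (List Bool) := {v | InF v ∧ BuiltFrom V v}

/-- `w` occurs in the infinite word `V` at position `k`. -/
def OccursAt (w : List Bool) (V : ℕ → Bool) (k : ℕ) : Prop :=
  ∀ i, i < w.length → w.getD i false = V (k + i)

/-- `w` is a factor (contiguous subword) of the infinite word `V`. -/
def FactorOfN (w : List Bool) (V : ℕ → Bool) : Prop := ∃ k, OccursAt w V k

/-- `w` occurs in the bi-infinite word `x` at position `k`. -/
def OccursAtZ (w : List Bool) (x : ℤ → Bool) (k : ℤ) : Prop :=
  ∀ i, i < w.length → w.getD i false = x (k + (i : ℤ))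

/-- `w` is a factor of the bi-infinite word `x`. -/
def FactorOfZ (w : List Bool) (x : ℤ → Bool) : Prop := ∃ k, OccursAtZ w x k

/-- The subshift associated to an infinite word `V`. -/
def Subshift (V : ℕ → Bool) : Set (ℤ → Bool) :=
  {x | ∀ w, FactorOfZ w x → FactorOfN w V}

/-- Thue–Morse words: `M 0 = 0`, `M (n+1) = M n ++ complement (M n)`. -/
def M : ℕ → List Bool
  | 0 => [false]
  | n + 1 => M n ++ (M n).map (fun b => !b)

/-- The Thue–Morse sequence: parity of the number of 1's in binary expansion. -/
def tm (n : ℕ) : Bool := decide (((Nat.digits 2 n).count 1) % 2 = 1)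

/-- Rank-two towers for the Thue–Morse sequence. -/
def M2 : ℕ → List Bool × List Bool
  | 0 => ([false], [false])
  | n + 1 =>
    if n % 2 = 1 then ((M2 n).1 ++ [true] ++ (M2 n).2, (M2 n).2 ++ [true] ++ (M2 n).1)
    else ((M2 n).1 ++ [true, true] ++ (M2 n).2, (M2 n).2 ++ (M2 n).1)

/-!
Reading the prefix `0110` of the Thue–Morse word, a word `v` of odd length `≥ 3` from which it is
built starts with `011`. Two consecutive equal letters of Thue–Morse sit at an odd position
`m, m + 1`, so there is no block `111`, and a copy of `v` glued after an odd-length prefix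
followed by `1^k` forces `k` to be odd; hence every gap `k` is `1` and all prefixes keep odd length.
The word is then `(v 1)^ω`, periodic, which Thue–Morse is not.
-/

theorem tm_two_mul (n : ℕ) : tm (2 * n) = tm n := by
  rcases Nat.eq_zero_or_pos n with rfl | hn
  · rfl
  · rw [tm, Nat.digits_def' (by norm_num) (by omega), Nat.mul_mod_right,
      Nat.mul_div_cancel_left n two_pos]
    simp [tm]

theorem tm_two_mul_add_one (n : ℕ) : tm (2 * n + 1) = !tm n := by
  rw [tm, tm, Nat.digits_def' (by norm_num) (by omega), Nat.mul_add_mod_self_left,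
    Nat.mul_add_div two_pos, List.count_cons_self]
  rcases Nat.mod_two_eq_zero_or_one ((Nat.digits 2 n).count 1) with h | h <;>
    simp [Nat.add_mod, h]

theorem odd_of_tm_eq_tm_succ {m : ℕ} (h : tm m = tm (m + 1)) : Odd m := by
  rcases Nat.even_or_odd' m with ⟨k, rfl | rfl⟩
  · rw [tm_two_mul_add_one, tm_two_mul] at h
    cases tm k <;> simp at h
  · exact odd_two_mul_add_one k

theorem tm_succ_ne_of_tm_eq_succ {m : ℕ} (h : tm m = tm (m + 1)) : tm (m + 1) ≠ tm (m + 2) :=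
  fun h' => Nat.not_odd_iff_even.mpr (odd_of_tm_eq_tm_succ h).add_one
    (odd_of_tm_eq_tm_succ h')

theorem tm_not_periodic {p : ℕ} (hp : 0 < p) : ¬ Function.Periodic tm p := by
  induction p using Nat.strong_induction_on with
  | _ p ih =>
    intro hper
    rcases Nat.even_or_odd' p with ⟨q, rfl | rfl⟩
    · refine ih q (by omega) (by omega) fun n => ?_
      simpa only [← mul_add, tm_two_mul] using hper (2 * n)
    · have h := hper (2 * q)
      rw [show 2 * q + (2 * q + 1) = 2 * (2 * q) + 1 by ring, tm_two_mul_add_one,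
        tm_two_mul] at h
      cases tm q <;> simp at h

section Stage

variable {v : List Bool} {a : ℕ → ℕ} {V : ℕ → Bool}

theorem length_stage_succ (n : ℕ) :
    (stage v a (n + 1)).length = (stage v a n).length + (a n + v.length) := by
  simp [stage, ones]

theorem lt_length_stage (hv : v ≠ []) (n : ℕ) : n < (stage v a n).length := by
  induction n with
  | zero => exact List.length_pos_iff.mpr hv
  | succ n ih => rw [length_stage_succ]; have := List.length_pos_iff.mpr hv; omega

theorem PrefixOf.occursAt_stage_succ {n : ℕ} (h : PrefixOf (stage v a (n + 1)) V) :
    OccursAt (ones (a n) ++ v) V (stage v a n).length := by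
  intro i hi
  have hi' : (stage v a n).length + i < (stage v a (n + 1)).length := by
    simp only [List.length_append] at hi; rw [length_stage_succ]; simpa [ones] using hi
  rw [← h _ hi', stage, List.append_assoc,
    List.getD_append_right (stage v a n) _ _ _ (by omega), Nat.add_sub_cancel_left]

theorem stage_const_succ (c n : ℕ) :
    stage v (fun _ => c) (n + 1) = (v ++ ones c) ++ stage v (fun _ => c) n := by
  induction n with
  | zero => rfl
  | succ n ih =>
    conv_lhs => rw [stage.eq_2, ih]
    simp [stage]

theorem periodic_of_prefixOf_stage_const {c : ℕ} (hv : v ≠ [])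
    (h : ∀ n, PrefixOf (stage v (fun _ => c) n) V) : Function.Periodic V (v.length + c) := by
  intro m
  have hm := lt_length_stage (a := fun _ => c) hv m
  have hm' : m + (v.length + c) < (stage v (fun _ => c) (m + 1)).length := by
    rw [length_stage_succ]; omega
  rw [← h (m + 1) _ hm', ← h m _ hm, stage_const_succ,
    List.getD_append_right _ _ _ _ (by simp [ones]), List.length_append, ones,
    List.length_replicate, Nat.add_sub_cancel]

end Stage

theorem eq_one_of_occursAt_ones_append_tm {v : List Bool} {k L : ℕ} (hv : PrefixOf v tm)
    (h3 : 3 ≤ v.length) (hocc : OccursAt (ones k ++ v) tm L) (hL : Odd L) : k = 1 := by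
  have hv_at (j : ℕ) (hj : j < v.length) : tm (L + (k + j)) = tm j := by
    rw [← hocc (k + j) (by simp [ones]; omega), ← hv j hj,
      List.getD_append_right _ _ _ _ (by simp [ones])]
    simp [ones]
  have hones (j : ℕ) (hj : j < k) : tm (L + j) = true := by
    rw [← hocc j (by simp [ones]; omega), List.getD_append _ _ _ _ (by simp [ones]; omega)]
    simp [ones, hj]
  have hgap_odd : Odd (L + (k + 1)) := odd_of_tm_eq_tm_succ <| by
    rw [hv_at 1 (by omega), show L + (k + 1) + 1 = L + (k + 2) by ring, hv_at 2 (by omega)]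
    decide
  have hk : k < 3 := by
    by_contra! hk
    have h0 : tm L = true := by simpa using hones 0 (by omega)
    exact tm_succ_ne_of_tm_eq_succ (h0.trans (hones 1 (by omega)).symm)
      ((hones 1 (by omega)).trans (hones 2 (by omega)).symm)
  obtain ⟨r, rfl⟩ := hL
  obtain ⟨s, hs⟩ := hgap_odd
  omega

theorem gap_eq_one_of_prefixOf_stage_tm {v : List Bool} {a : ℕ → ℕ}
    (h : ∀ n, PrefixOf (stage v a n) tm) (hodd : Odd v.length) (h3 : 3 ≤ v.length) (n : ℕ) :
    a n = 1 := by
  have hgap {n : ℕ} (hn : Odd (stage v a n).length) : a n = 1 :=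
    eq_one_of_occursAt_ones_append_tm (h 0) h3 (h (n + 1)).occursAt_stage_succ hn
  have hlen : ∀ n, Odd (stage v a n).length := by
    intro n
    induction n with
    | zero => exact hodd
    | succ n ih =>
      rw [length_stage_succ, hgap ih, ← add_assoc]
      exact (ih.add_odd odd_one).add_odd hodd
  exact hgap (hlen n)

theorem stmt5 : ¬ ∃ v : List Bool, InF v ∧ v.length % 2 = 1 ∧ v ≠ [false] ∧ BuiltFrom tm v := by
  rintro ⟨v, ⟨hhead, -⟩, hodd, hne, a, hpre⟩
  have h3 : 3 ≤ v.length := by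
    rcases v with _ | ⟨x, _ | ⟨y, w⟩⟩
    · simp at hhead
    · simp_all
    · simp at hodd ⊢; omega
  have ha : a = fun _ => 1 :=
    funext (gap_eq_one_of_prefixOf_stage_tm hpre (Nat.odd_iff.mpr hodd) h3)
  subst ha
  exact tm_not_periodic (by omega)
    (periodic_of_prefixOf_stage_const (List.ne_nil_of_length_pos (by omega)) hpre)
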